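/- arXiv:1002.1599 — 2 statements merged into one kernel-verified Lean document; each statement's English description precedes it below -/
import Mathlib

section
/- In a minimal compact Hausdorff left topological left semiring X, for every element a the set a·X = {a·x : x ∈ X} equals all of X. -/
section LeftSemiring

variable {X : Type*} (p m : X → X → X)

theorem add_mem_range_mul_left (hld : ∀ x y z : X, m x (p y z) = p (m x y) (m x z)) (a : X) :
    ∀ x ∈ Set.range (m a), ∀ y ∈ Set.range (m a), p x y ∈ Set.range (m a) := by
  rintro _ ⟨x, rfl⟩ _ ⟨y, rfl⟩
  exact ⟨p x y, hld a x y⟩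

theorem mul_mem_range_mul_left (hm_assoc : ∀ x y z : X, m (m x y) z = m x (m y z)) (a : X) :
    ∀ x ∈ Set.range (m a), ∀ y, m x y ∈ Set.range (m a) := by
  rintro _ ⟨x, rfl⟩ y
  exact ⟨m x y, (hm_assoc a x y).symm⟩

end LeftSemiring

theorem stmt_3_general {X : Type*} [TopologicalSpace X] [CompactSpace X] [Nonempty X]
    (p m : X → X → X)
    (hm_assoc : ∀ x y z : X, m (m x y) z = m x (m y z))
    (hld : ∀ x y z : X, m x (p y z) = p (m x y) (m x z))
    (hmc : ∀ a : X, Continuous fun x => m a x)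
    (hmin : ∀ A : Set X, A.Nonempty → IsCompact A →
      (∀ x ∈ A, ∀ y ∈ A, p x y ∈ A) → (∀ x ∈ A, ∀ y ∈ A, m x y ∈ A) → A = Set.univ)
    (a : X) :
    Set.range (fun x => m a x) = Set.univ :=
  hmin _ (Set.range_nonempty _) (isCompact_range (hmc a))
    (add_mem_range_mul_left p m hld a) fun x hx y _ => mul_mem_range_mul_left m hm_assoc a x hx y

/-- In a minimal compact Hausdorff left topological left semiring, a·X = X for every a. -/
theorem stmt_3 {X : Type*} [TopologicalSpace X] [CompactSpace X] [T2Space X] [Nonempty X]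
    (p m : X → X → X)
    (hp_assoc : ∀ x y z : X, p (p x y) z = p x (p y z))
    (hm_assoc : ∀ x y z : X, m (m x y) z = m x (m y z))
    (hld : ∀ x y z : X, m x (p y z) = p (m x y) (m x z))
    (hpc : ∀ a : X, Continuous fun x => p a x)
    (hmc : ∀ a : X, Continuous fun x => m a x)
    (hmin : ∀ A : Set X, A.Nonempty → IsCompact A →
      (∀ x ∈ A, ∀ y ∈ A, p x y ∈ A) → (∀ x ∈ A, ∀ y ∈ A, m x y ∈ A) → A = Set.univ)
    (a : X) :
    Set.range (fun x => m a x) = Set.univ :=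
  stmt_3_general p m hm_assoc hld hmc hmin a
end

section
/- Every nonempty compact Hausdorff left topological groupoid satisfying the identities (x·x)·(y·z) = ((x·x)·y)·z and (x·y)·(x·z) = x·(y·(x·z)) has an idempotent, i.e., an element a with a·a = a. -/
/-!
By Zorn's lemma and compactness there is a minimal nonempty closed subgroupoid `S`. For `b ∈ S`
the element `a = b·b` lies in `S`, and the first identity makes left multiplication by `a`
associative: `a·(y·z) = (a·y)·z`. By the second identity `a·S` is again a subgroupoid, compact
as the continuous image of `S`, so minimality gives `a·S = S` and hence `a·y = a` for some `y ∈ S`.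
Associativity at `a` then makes `{z ∈ S | a·z = a}` a nonempty closed subgroupoid, so it is all
of `S`, and in particular `a·a = a`.
-/

section

variable {X : Type*} [TopologicalSpace X]

structure IsClosedSubgroupoid (m : X → X → X) (S : Set X) : Prop where
  nonempty : S.Nonempty
  isClosed : IsClosed S
  mul_mem : ∀ x ∈ S, ∀ y ∈ S, m x y ∈ S

namespace IsClosedSubgroupoid

variable {m : X → X → X}

theorem exists_minimal [CompactSpace X] [Nonempty X] (m : X → X → X) :
    ∃ S, Minimal (IsClosedSubgroupoid m) S := by
  have huniv : IsClosedSubgroupoid m Set.univ :=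
    ⟨Set.univ_nonempty, isClosed_univ, fun _ _ _ _ => trivial⟩
  obtain ⟨S, -, hS⟩ := zorn_superset_nonempty {S | IsClosedSubgroupoid m S}
    (fun c hc hchain hcne => by
      have : Nonempty c := hcne.to_subtype
      refine ⟨⋂₀ c, ⟨?_, isClosed_sInter fun U hU => (hc hU).isClosed, ?_⟩,
        fun _ => Set.sInter_subset_of_mem⟩
      · exact IsCompact.nonempty_sInter_of_directed_nonempty_isCompact_isClosed
          (IsChain.directedOn hchain.symm) (fun U hU => (hc hU).nonempty)
          (fun U hU => (hc hU).isClosed.isCompact) (fun U hU => (hc hU).isClosed)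
      · exact fun x hx y hy U hU => (hc hU).mul_mem x (hx U hU) y (hy U hU))
    Set.univ huniv
  exact ⟨S, hS⟩

theorem image_mul_left [CompactSpace X] [T2Space X] {S : Set X} (hS : IsClosedSubgroupoid m S)
    {a : X} (haS : a ∈ S) (ha : Continuous (m a))
    (hdist : ∀ y z, m (m a y) (m a z) = m a (m y (m a z))) :
    IsClosedSubgroupoid m (m a '' S) where
  nonempty := hS.nonempty.image _
  isClosed := (hS.isClosed.isCompact.image ha).isClosed
  mul_mem := by
    rintro _ ⟨y, hy, rfl⟩ _ ⟨z, hz, rfl⟩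
    exact ⟨m y (m a z), hS.mul_mem y hy _ (hS.mul_mem a haS z hz), (hdist y z).symm⟩

theorem sep_mul_left_eq [T1Space X] {S : Set X} (hS : IsClosedSubgroupoid m S) {a : X}
    (ha : Continuous (m a)) (hassoc : ∀ y z, m a (m y z) = m (m a y) z)
    (hne : ∃ y ∈ S, m a y = a) :
    IsClosedSubgroupoid m {z ∈ S | m a z = a} where
  nonempty := hne
  isClosed := hS.isClosed.inter (isClosed_singleton.preimage ha)
  mul_mem := by
    rintro y ⟨hyS, hy⟩ z ⟨hzS, hz⟩
    exact ⟨hS.mul_mem y hyS z hzS, by rw [hassoc, hy, hz]⟩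

end IsClosedSubgroupoid

theorem Minimal.mul_self_eq_of_isClosedSubgroupoid [CompactSpace X] [T2Space X]
    {m : X → X → X} {S : Set X} (hS : Minimal (IsClosedSubgroupoid m) S) {a : X} (haS : a ∈ S)
    (ha : Continuous (m a)) (hassoc : ∀ y z, m a (m y z) = m (m a y) z)
    (hdist : ∀ y z, m (m a y) (m a z) = m a (m y (m a z))) :
    m a a = a := by
  have himage : m a '' S ⊆ S := Set.image_subset_iff.2 fun y hy => hS.prop.mul_mem a haS y hy
  obtain ⟨y, hyS, hya⟩ : a ∈ m a '' S :=
    hS.le_of_le (hS.prop.image_mul_left haS ha hdist) himage haS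
  have hsep := hS.prop.sep_mul_left_eq ha hassoc ⟨y, hyS, hya⟩
  exact (hS.le_of_le hsep (Set.sep_subset _ _) haS).2

end

/-- Every nonempty compact Hausdorff left topological groupoid satisfying
`(x·x)·(y·z) = ((x·x)·y)·z` and `(x·y)·(x·z) = x·(y·(x·z))` has an idempotent. -/
theorem stmt_17 {X : Type*} [TopologicalSpace X] [CompactSpace X] [T2Space X] [Nonempty X]
    (m : X → X → X)
    (hmc : ∀ a : X, Continuous fun x => m a x)
    (h1 : ∀ x y z : X, m (m x x) (m y z) = m (m (m x x) y) z)
    (h2 : ∀ x y z : X, m (m x y) (m x z) = m x (m y (m x z))) :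
    ∃ a : X, m a a = a := by
  obtain ⟨S, hS⟩ := IsClosedSubgroupoid.exists_minimal m
  obtain ⟨b, hb⟩ := hS.prop.nonempty
  exact ⟨m b b, hS.mul_self_eq_of_isClosedSubgroupoid (hS.prop.mul_mem b hb b hb) (hmc _)
    (h1 b) (h2 _)⟩
end
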